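/- If the monoid presentation ⟨G | u_i = v_i (i < m)⟩ does not prove u = v, then the theory T is rigid: for every linear-regular term t(x1,...,xn) of T and every permutation σ of {1,...,n}, if T ⊢ t(x1,...,xn) = t(x_{σ(1)},...,x_{σ(n)}) then σ is the identity. -/

import Mathlib

/-- Terms of the theory `T`: unary symbols `g x` for each letter `x` of the alphabet `Fin N`,
an extra unary symbol `al` (written α), and a binary symbol `m`, in context `x_1, ..., x_n`. -/
inductive TmT (N : ℕ) : ℕ → Type
  | var {n} : Fin n → TmT N n
  | g {n} : Fin N → TmT N n → TmT N n
  | al {n} : TmT N n → TmT N n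
  | m {n} : TmT N n → TmT N n → TmT N n

/-- A word `w` over the alphabet applied to a term as a composite of unary symbols. -/
def wApp {N n : ℕ} (w : List (Fin N)) (t : TmT N n) : TmT N n :=
  w.foldr (fun x s => TmT.g x s) t

/-- Equational provability in the theory `T` with axioms `u_i(x1) = v_i(x1)` (for `i : Fin M`,
where `u_i = ur i`, `v_i = vr i`) and `m(uα(x1), x2) = m(vα(x2), x1)`, closed under
all substitution instances and congruence. -/
inductive ProvT {N : ℕ} (M : ℕ) (ur vr : Fin M → List (Fin N)) (u v : List (Fin N)) :
    {n : ℕ} → TmT N n → TmT N n → Prop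
  | refl {n} (t : TmT N n) : ProvT M ur vr u v t t
  | symm {n} {s t : TmT N n} : ProvT M ur vr u v s t → ProvT M ur vr u v t s
  | trans {n} {s t w : TmT N n} :
      ProvT M ur vr u v s t → ProvT M ur vr u v t w → ProvT M ur vr u v s w
  | congg {n} (x : Fin N) {s t : TmT N n} :
      ProvT M ur vr u v s t → ProvT M ur vr u v (.g x s) (.g x t)
  | congal {n} {s t : TmT N n} : ProvT M ur vr u v s t → ProvT M ur vr u v (.al s) (.al t)
  | congm {n} {a a' b b' : TmT N n} : ProvT M ur vr u v a a' → ProvT M ur vr u v b b' →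
      ProvT M ur vr u v (.m a b) (.m a' b')
  | axu {n} (i : Fin M) (t : TmT N n) : ProvT M ur vr u v (wApp (ur i) t) (wApp (vr i) t)
  | axm {n} (t₁ t₂ : TmT N n) :
      ProvT M ur vr u v (.m (wApp u (.al t₁)) t₂) (.m (wApp v (.al t₂)) t₁)

/-- Provability of word equations from the monoid presentation
`⟨ Fin N | ur i = vr i (i : Fin M) ⟩`: the congruence on the free monoid of words
over `Fin N` generated by the relations. -/
inductive MonProv {N M : ℕ} (ur vr : Fin M → List (Fin N)) :
    List (Fin N) → List (Fin N) → Prop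
  | of (i : Fin M) : MonProv ur vr (ur i) (vr i)
  | refl (w : List (Fin N)) : MonProv ur vr w w
  | symm {a b} : MonProv ur vr a b → MonProv ur vr b a
  | trans {a b c} : MonProv ur vr a b → MonProv ur vr b c → MonProv ur vr a c
  | mul {a b c d} : MonProv ur vr a b → MonProv ur vr c d → MonProv ur vr (a ++ c) (b ++ d)

/-- The left-to-right list of variable occurrences of a term of `T`. -/
def varListT {N n : ℕ} : TmT N n → List (Fin n)
  | .var i => [i]
  | .g _ t => varListT t
  | .al t => varListT t
  | .m a b => varListT a ++ varListT b

/-- A term of `T` in context `x_1, ..., x_n` is linear-regular if every variable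
occurs exactly once. -/
def LinRegT {N n : ℕ} (t : TmT N n) : Prop := ∀ i : Fin n, (varListT t).count i = 1

/-- Substitution of variables along a map of variables (`t(x_{σ(1)},...,x_{σ(n)})`). -/
def renameT {N n : ℕ} (σ : Fin n → Fin n) : TmT N n → TmT N n
  | .var i => .var (σ i)
  | .g x t => .g x (renameT σ t)
  | .al t => .al (renameT σ t)
  | .m a b => .m (renameT σ a) (renameT σ b)

/-- The theory `T` is rigid: no linear-regular term is provably equal to a nontrivial
permutation of its variables. -/
def RigidT {N : ℕ} (M : ℕ) (ur vr : Fin M → List (Fin N)) (u v : List (Fin N)) : Prop :=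
  ∀ (n : ℕ) (t : TmT N n), LinRegT t → ∀ σ : Equiv.Perm (Fin n),
    ProvT M ur vr u v t (renameT σ t) → σ = 1

/-!
Interpret terms of `T` in labelled trees over a monoid `Q` satisfying the relations
`u_i = v_i` but with `u ≠ v`: letters multiply the top label, and `m` is evaluated by
rewriting `m(uα(s), b)` to `m(vα(b), s)`. Because `u ≠ v` in `Q`, this rewriting never
applies to its own output, so provably equal terms have equal interpretations. The variables of a
term occur in its interpretation, and renaming commutes with interpretation, so
`t = t(σ x)` forces `σ` to fix every variable of `t`. The presented monoid itself serves as `Q`.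
-/

inductive LabelTree (Q V : Type*)
  | var : Q → V → LabelTree Q V
  | al : Q → LabelTree Q V → LabelTree Q V
  | m : Q → LabelTree Q V → LabelTree Q V → LabelTree Q V

namespace LabelTree

variable {Q V W : Type*}

def label : LabelTree Q V → Q
  | var q _ => q
  | al q _ => q
  | m q _ _ => q

def withLabel (q : Q) : LabelTree Q V → LabelTree Q V
  | var _ i => var q i
  | al _ s => al q s
  | m _ a b => m q a b

def map (σ : V → W) : LabelTree Q V → LabelTree Q W
  | var q i => var q (σ i)
  | al q s => al q (map σ s)
  | m q a b => m q (map σ a) (map σ b)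

def vars : LabelTree Q V → List V
  | var _ i => [i]
  | al _ s => vars s
  | m _ a b => vars a ++ vars b

@[simp]
lemma withLabel_label (x : LabelTree Q V) : x.withLabel x.label = x := by
  cases x <;> rfl

@[simp]
lemma label_withLabel (q : Q) (x : LabelTree Q V) : (x.withLabel q).label = q := by
  cases x <;> rfl

@[simp]
lemma withLabel_withLabel (p q : Q) (x : LabelTree Q V) :
    (x.withLabel q).withLabel p = x.withLabel p := by
  cases x <;> rfl

@[simp]
lemma map_withLabel (σ : V → W) (q : Q) (x : LabelTree Q V) :
    (x.withLabel q).map σ = (x.map σ).withLabel q := by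
  cases x <;> rfl

@[simp]
lemma label_map (σ : V → W) (x : LabelTree Q V) : (x.map σ).label = x.label := by
  cases x <;> rfl

@[simp]
lemma vars_withLabel (q : Q) (x : LabelTree Q V) : (x.withLabel q).vars = x.vars := by
  cases x <;> rfl

lemma vars_map (σ : V → W) (x : LabelTree Q V) : (x.map σ).vars = x.vars.map σ := by
  induction x <;> simp [map, vars, *]

instance [Monoid Q] : MulAction Q (LabelTree Q V) where
  smul p x := x.withLabel (p * x.label)
  one_smul x := by simp [HSMul.hSMul]
  mul_smul p q x := by simp [HSMul.hSMul, mul_assoc]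

lemma smul_def [Monoid Q] (p : Q) (x : LabelTree Q V) : p • x = x.withLabel (p * x.label) :=
  rfl

/-- Evaluation of `m` orienting the axiom `m(uα(s), b) = m(vα(b), s)`, where `qu`, `qv`
interpret `u`, `v`. -/
def mSwap [One Q] [DecidableEq Q] (qu qv : Q) : LabelTree Q V → LabelTree Q V → LabelTree Q V
  | al q s, b => if q = qu then m 1 (al qv b) s else m 1 (al q s) b
  | a, b => m 1 a b

lemma mSwap_al_of_ne [One Q] [DecidableEq Q] {qu qv : Q} (h : qv ≠ qu) (s b : LabelTree Q V) :
    mSwap qu qv (al qu s) b = mSwap qu qv (al qv b) s := by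
  simp [mSwap, h]

lemma map_mSwap [One Q] [DecidableEq Q] (qu qv : Q) (σ : V → W) (a b : LabelTree Q V) :
    (mSwap qu qv a b).map σ = mSwap qu qv (a.map σ) (b.map σ) := by
  cases a with
  | al q s => by_cases hq : q = qu <;> simp [mSwap, map, hq]
  | _ => rfl

lemma vars_mSwap_perm [One Q] [DecidableEq Q] (qu qv : Q) (a b : LabelTree Q V) :
    (mSwap qu qv a b).vars.Perm (a.vars ++ b.vars) := by
  cases a with
  | al q s =>
    by_cases hq : q = qu
    · simpa [mSwap, vars, hq] using List.perm_append_comm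
    · simp [mSwap, vars, hq]
  | _ => rfl

end LabelTree

open LabelTree

section Interpretation

variable {N M n : ℕ} {Q : Type*} [Monoid Q] [DecidableEq Q] (φ : FreeMonoid (Fin N) →* Q)
  (u v : List (Fin N))

def evalT : TmT N n → LabelTree Q (Fin n)
  | .var i => .var 1 i
  | .g x t => φ (.of x) • evalT t
  | .al t => .al 1 (evalT t)
  | .m a b => mSwap (φ (.ofList u)) (φ (.ofList v)) (evalT a) (evalT b)

lemma evalT_wApp (w : List (Fin N)) (t : TmT N n) :
    evalT φ u v (wApp w t) = φ (.ofList w) • evalT φ u v t := by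
  induction w with
  | nil => simp [wApp]
  | cons x w ih =>
    rw [FreeMonoid.ofList_cons, map_mul, mul_smul, ← ih]
    rfl

lemma evalT_renameT (σ : Fin n → Fin n) (t : TmT N n) :
    evalT φ u v (renameT σ t) = (evalT φ u v t).map σ := by
  induction t with
  | var i => rfl
  | g x t ih => simp only [renameT, evalT, ih, smul_def, map_withLabel, label_map]
  | al t ih => simp only [renameT, evalT, ih, LabelTree.map]
  | m a b iha ihb => simp only [renameT, evalT, iha, ihb, map_mSwap]

lemma vars_evalT_perm (t : TmT N n) : (evalT φ u v t).vars.Perm (varListT t) := by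
  induction t with
  | var i => rfl
  | g x t ih => simpa [evalT, smul_def, varListT] using ih
  | al t ih => exact ih
  | m a b iha ihb => exact (vars_mSwap_perm _ _ _ _).trans (iha.append ihb)

variable {φ u v} {ur vr : Fin M → List (Fin N)}

lemma evalT_eq_of_provT (hrel : ∀ i, φ (.ofList (ur i)) = φ (.ofList (vr i)))
    (huv : φ (.ofList v) ≠ φ (.ofList u)) {s t : TmT N n} (hst : ProvT M ur vr u v s t) :
    evalT φ u v s = evalT φ u v t := by
  induction hst with
  | refl => rfl
  | symm _ ih => exact ih.symm
  | trans _ _ ih₁ ih₂ => exact ih₁.trans ih₂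
  | congg x _ ih => simp only [evalT, ih]
  | congal _ ih => simp only [evalT, ih]
  | congm _ _ ih₁ ih₂ => simp only [evalT, ih₁, ih₂]
  | axu i t => rw [evalT_wApp, evalT_wApp, hrel]
  | axm t₁ t₂ =>
    simp only [evalT, evalT_wApp, smul_def, label, withLabel, mul_one]
    exact mSwap_al_of_ne huv _ _

theorem rigidT_of_separating_hom (hrel : ∀ i, φ (.ofList (ur i)) = φ (.ofList (vr i)))
    (huv : φ (.ofList v) ≠ φ (.ofList u)) : RigidT M ur vr u v := by
  intro n t ht σ hst
  have hfix : (evalT φ u v t).vars.map σ = (evalT φ u v t).vars.map id := by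
    rw [← vars_map, ← evalT_renameT, ← evalT_eq_of_provT hrel huv hst, List.map_id]
  ext i
  have hi : i ∈ (evalT φ u v t).vars :=
    (vars_evalT_perm φ u v t).mem_iff.2 (List.count_pos_iff.1 (by rw [ht i]; exact one_pos))
  exact congrArg Fin.val (List.map_eq_map_iff.1 hfix i hi)

end Interpretation

def presentationCon {N M : ℕ} (ur vr : Fin M → List (Fin N)) : Con (FreeMonoid (Fin N)) where
  r a b := MonProv ur vr a.toList b.toList
  iseqv := ⟨fun _ => .refl _, .symm, .trans⟩
  mul' := .mul

/-- If the monoid presentation does not prove `u = v`, then `T` is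
rigid: every linear-regular term provably equal in `T` to a permuted version of itself
forces the permutation to be the identity. -/
theorem rigid_of_not_word_problem {N M : ℕ} (ur vr : Fin M → List (Fin N))
    (u v : List (Fin N)) (h : ¬ MonProv ur vr u v) :
    RigidT M ur vr u v := by
  classical
  refine rigidT_of_separating_hom (φ := (presentationCon ur vr).mk') (fun i => ?_) fun hvu => ?_
  · exact (presentationCon ur vr).eq.2 (.of i)
  · exact h (.symm ((presentationCon ur vr).eq.1 hvu))
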